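/- Let z ∈ ℝᵐ, let λ > 0 satisfy 1/√(‖z‖₀) < λ < ‖z‖_∞/‖z‖₂ (in particular z ≠ 0), and define G(β) = ‖z − β‖₂ + λ‖β‖₁. Then any global minimizer β of G satisfies β ≠ 0 and β ≠ z. -/

import Mathlib

/-!
From `β = 0`, move a distance `t = |z_j| - λ‖z‖₂` towards `z` along a coordinate with
`|z_j| > λ‖z‖₂`, which exists since `‖z‖_∞ > λ‖z‖₂`: the residual `‖z - β‖₂` then drops by
more than the penalty `λ t` gained.
From `β = z`, shrink every nonzero coordinate of `z` towards `0` by some `t > 0` smaller than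
all of them: the residual costs `t √‖z‖₀`, while the penalty saves `λ t ‖z‖₀`, which is more
since `λ √‖z‖₀ > 1`.
-/

open scoped BigOperators

/-- Euclidean norm of a vector in `ℝᵐ`. -/
noncomputable def norm2 {m : ℕ} (v : Fin m → ℝ) : ℝ := Real.sqrt (∑ i, (v i) ^ 2)

/-- ℓ1-norm of a vector in `ℝᵐ`. -/
noncomputable def norm1 {m : ℕ} (v : Fin m → ℝ) : ℝ := ∑ i, |v i|

/-- Sup-norm of a vector in `ℝᵐ`: `‖v‖_∞ = maxᵢ |vᵢ|`. -/
noncomputable def norminf {m : ℕ} (v : Fin m → ℝ) : ℝ := ⨆ i, |v i|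

/-- Number of nonzero entries of a vector in `ℝᵐ`: `‖v‖₀`. -/
noncomputable def norm0 {m : ℕ} (v : Fin m → ℝ) : ℕ := {i | v i ≠ 0}.ncard

/-- The square-root soft-waveshrink objective in the orthonormal wavelet domain:
`G(β) = ‖z − β‖₂ + λ‖β‖₁`. -/
noncomputable def srswObj {m : ℕ} (z : Fin m → ℝ) (lam : ℝ) (β : Fin m → ℝ) : ℝ :=
  norm2 (z - β) + lam * norm1 β

namespace Real

lemma sign_mul_self_eq_abs (x : ℝ) : sign x * x = |x| := by
  rcases lt_trichotomy x 0 with hx | rfl | hx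
  · rw [sign_of_neg hx, abs_of_neg hx]; ring
  · simp
  · rw [sign_of_pos hx, abs_of_pos hx, one_mul]

lemma abs_sign_of_ne_zero {x : ℝ} (hx : x ≠ 0) : |sign x| = 1 := by
  rcases sign_apply_eq_of_ne_zero x hx with h | h <;> simp [h]

lemma sign_sq_eq_abs_sign (x : ℝ) : sign x ^ 2 = |sign x| := by
  rcases sign_apply_eq x with h | h | h <;> simp [h]

lemma abs_sub_mul_sign {t x : ℝ} (htx : x ≠ 0 → t ≤ |x|) :
    |x - t * sign x| = |x| - t * |sign x| := by
  rcases lt_trichotomy x 0 with hx | rfl | hx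
  · have := htx hx.ne
    rw [abs_of_neg hx] at this ⊢
    rw [sign_of_neg hx, abs_of_nonpos (by linarith), abs_neg, abs_one]
    ring
  · simp
  · have := htx hx.ne'
    rw [abs_of_pos hx] at this ⊢
    rw [sign_of_pos hx, abs_of_nonneg (by linarith), abs_one]

end Real

section Norms

variable {m : ℕ}

lemma norm2_nonneg (v : Fin m → ℝ) : 0 ≤ norm2 v := Real.sqrt_nonneg _

lemma norm2_sq (v : Fin m → ℝ) : norm2 v ^ 2 = ∑ i, v i ^ 2 :=
  Real.sq_sqrt (Finset.sum_nonneg fun i _ => sq_nonneg (v i))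

lemma abs_le_norm2 (v : Fin m → ℝ) (j : Fin m) : |v j| ≤ norm2 v := by
  rw [← Real.sqrt_sq_eq_abs]
  exact Real.sqrt_le_sqrt
    (Finset.single_le_sum (fun i _ => sq_nonneg (v i)) (Finset.mem_univ j))

lemma norm2_sub_single_sq (z : Fin m → ℝ) (j : Fin m) (c : ℝ) :
    norm2 (z - Pi.single j c) ^ 2 = norm2 z ^ 2 - 2 * c * z j + c ^ 2 := by
  simp only [norm2_sq, Pi.sub_apply, sub_sq, Finset.sum_add_distrib, Finset.sum_sub_distrib,
    Pi.single_apply, mul_ite, mul_zero, ite_pow, ne_eq, OfNat.ofNat_ne_zero, not_false_eq_true,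
    zero_pow, Finset.sum_ite_eq', Finset.mem_univ, if_true]
  ring

lemma norm1_single (j : Fin m) (c : ℝ) : norm1 (Pi.single j c) = |c| := by
  simp [norm1, Pi.single_apply, apply_ite]

lemma exists_lt_abs_of_lt_norminf {v : Fin m → ℝ} {c : ℝ} (hc : 0 ≤ c) (h : c < norminf v) :
    ∃ j, c < |v j| := by
  by_contra! hv
  exact h.not_ge (Real.iSup_le hv hc)

lemma norm0_pos {v : Fin m → ℝ} {j : Fin m} (hj : v j ≠ 0) : 0 < norm0 v :=
  (Set.ncard_pos).2 ⟨j, hj⟩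

lemma sum_abs_sign_eq_norm0 (v : Fin m → ℝ) : ∑ i, |Real.sign (v i)| = norm0 v := by
  have h (i : Fin m) : |Real.sign (v i)| = if v i ≠ 0 then 1 else 0 := by
    split_ifs with hi
    · exact Real.abs_sign_of_ne_zero hi
    · simp [not_not.1 hi]
  simp only [h, Finset.sum_boole]
  simp [norm0, Set.ncard_eq_toFinset_card']

lemma exists_pos_le_abs_of_ne_zero (v : Fin m → ℝ) : ∃ t > 0, ∀ i, v i ≠ 0 → t ≤ |v i| := by
  have : ∀ᶠ t in nhdsWithin (0 : ℝ) (Set.Ioi 0), ∀ i, v i ≠ 0 → t ≤ |v i| :=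
    Filter.eventually_all.2 fun i => by
      rcases eq_or_ne (v i) 0 with hi | hi
      · simp [hi]
      · exact ((eventually_le_nhds (abs_pos.2 hi)).filter_mono nhdsWithin_le_nhds).mono
          fun t ht _ => ht
  exact (this.and self_mem_nhdsWithin).exists.imp fun t ht => ⟨ht.2, ht.1⟩

end Norms

section Objective

variable {m : ℕ}

lemma srswObj_zero (z : Fin m → ℝ) (lam : ℝ) : srswObj z lam 0 = norm2 z := by
  simp [srswObj, norm1]

lemma srswObj_self (z : Fin m → ℝ) (lam : ℝ) : srswObj z lam z = lam * norm1 z := by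
  simp [srswObj, norm2]

variable {z : Fin m → ℝ} {lam : ℝ}

lemma exists_srswObj_lt_srswObj_zero {j : Fin m} (hlam : 0 < lam) (hj : lam * norm2 z < |z j|) :
    ∃ γ, srswObj z lam γ < srswObj z lam 0 := by
  have hza : |z j| ≤ norm2 z := abs_le_norm2 z j
  have hzj : z j ≠ 0 := abs_pos.1 ((mul_nonneg hlam.le (norm2_nonneg z)).trans_lt hj)
  have hlam1 : lam < 1 := by nlinarith [abs_pos.2 hzj]
  refine ⟨Pi.single j ((|z j| - lam * norm2 z) * Real.sign (z j)), ?_⟩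
  obtain ⟨t, ht, hzt⟩ : ∃ t, 0 < t ∧ |z j| = t + lam * norm2 z := ⟨_, sub_pos.2 hj, by ring⟩
  rw [hzt, add_sub_cancel_right]
  have hres : norm2 (z - Pi.single j (t * Real.sign (z j))) ^ 2 =
      norm2 z ^ 2 - 2 * lam * norm2 z * t - t ^ 2 := by
    rw [norm2_sub_single_sq, mul_pow, Real.sign_sq_eq_abs_sign, Real.abs_sign_of_ne_zero hzj,
      mul_assoc 2, mul_assoc t, Real.sign_mul_self_eq_abs, hzt]
    ring
  have hpen : norm1 (Pi.single j (t * Real.sign (z j))) = t := by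
    rw [norm1_single, abs_mul, Real.abs_sign_of_ne_zero hzj, mul_one, abs_of_pos ht]
  have hdrop : norm2 (z - Pi.single j (t * Real.sign (z j))) < norm2 z - lam * t := by
    refine lt_of_pow_lt_pow_left₀ 2 (by nlinarith) ?_
    rw [hres]
    nlinarith [sq_nonneg (lam * t), mul_pos ht ht]
  rw [srswObj, srswObj_zero, hpen]
  linarith

lemma srswObj_shrink {t : ℝ} (ht : 0 ≤ t) (htz : ∀ i, z i ≠ 0 → t ≤ |z i|) :
    srswObj z lam (fun i => z i - t * Real.sign (z i)) =
      t * √(norm0 z) + lam * (norm1 z - t * norm0 z) := by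
  have hdiff : z - (fun i => z i - t * Real.sign (z i)) = fun i => t * Real.sign (z i) := by
    ext i; simp
  have hres : norm2 (fun i => t * Real.sign (z i)) = t * √(norm0 z) := by
    simp only [norm2, mul_pow, Real.sign_sq_eq_abs_sign, ← Finset.mul_sum, sum_abs_sign_eq_norm0,
      Real.sqrt_mul (sq_nonneg t), Real.sqrt_sq ht]
  have hpen : norm1 (fun i => z i - t * Real.sign (z i)) = norm1 z - t * norm0 z := by
    simp only [norm1, Real.abs_sub_mul_sign (htz _), Finset.sum_sub_distrib, ← Finset.mul_sum,
      sum_abs_sign_eq_norm0]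
  rw [srswObj, hdiff, hres, hpen]

lemma exists_srswObj_lt_srswObj_self (h : 1 < lam * √(norm0 z)) :
    ∃ γ, srswObj z lam γ < srswObj z lam z := by
  obtain ⟨t, ht, htz⟩ := exists_pos_le_abs_of_ne_zero z
  refine ⟨_, (srswObj_shrink ht.le htz).trans_lt ?_⟩
  have hk : √(norm0 z) * √(norm0 z) = norm0 z := Real.mul_self_sqrt (Nat.cast_nonneg _)
  have hsk : 0 < √(norm0 z) :=
    (Real.sqrt_nonneg _).lt_of_ne fun h0 => by rw [← h0, mul_zero] at h; linarith
  have hsave : t * √(norm0 z) < lam * (t * norm0 z) :=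
    calc t * √(norm0 z) = t * √(norm0 z) * 1 := (mul_one _).symm
      _ < t * √(norm0 z) * (lam * √(norm0 z)) := mul_lt_mul_of_pos_left h (by positivity)
      _ = lam * (t * (√(norm0 z) * √(norm0 z))) := by ring
      _ = lam * (t * norm0 z) := by rw [hk]
  rw [srswObj_self]
  linarith

end Objective

/-- If `1/√(‖z‖₀) < λ < ‖z‖_∞/‖z‖₂` (in particular `z ≠ 0`), then any global
minimizer `β` of `G(β) = ‖z − β‖₂ + λ‖β‖₁` satisfies `β ≠ 0` and `β ≠ z`. -/
theorem minimizer_nontrivial_srsw {m : ℕ} (z : Fin m → ℝ) (lam : ℝ)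
    (hlam : 0 < lam)
    (hlow : 1 / Real.sqrt (norm0 z) < lam)
    (hhigh : lam < norminf z / norm2 z) :
    ∀ β : Fin m → ℝ, (∀ γ : Fin m → ℝ, srswObj z lam β ≤ srswObj z lam γ) →
      β ≠ 0 ∧ β ≠ z := by
  intro β hβ
  have hz : 0 < norm2 z := by
    refine (norm2_nonneg z).lt_of_ne fun h => ?_
    rw [← h, div_zero] at hhigh
    linarith
  obtain ⟨j, hj⟩ := exists_lt_abs_of_lt_norminf (by positivity) ((lt_div_iff₀ hz).1 hhigh)
  have hzj : z j ≠ 0 := abs_pos.1 ((mul_nonneg hlam.le hz.le).trans_lt hj)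
  have hk : 0 < √(norm0 z) := Real.sqrt_pos.2 (Nat.cast_pos.2 (norm0_pos hzj))
  refine ⟨fun hβ0 => ?_, fun hβz => ?_⟩
  · obtain ⟨γ, hγ⟩ := exists_srswObj_lt_srswObj_zero hlam hj
    exact (hβ γ).not_gt (hβ0 ▸ hγ)
  · obtain ⟨γ, hγ⟩ := exists_srswObj_lt_srswObj_self ((div_lt_iff₀ hk).1 hlow)
    exact (hβ γ).not_gt (hβz ▸ hγ)
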